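/- arXiv:2507.20646 — 2 statements merged into one kernel-verified Lean document; each statement's English description precedes it below -/
import Mathlib

section
/- For the para-Krawtchouk recurrence coefficient C_{n+1} = -(n+1)(n - N)(2n + 1 - N - γ)(2n + 1 - N + γ)/(4(2n - N)(2n - N + 2)), if N is an odd positive integer, 0 < γ < 2, and 0 ≤ n < N - 1, then C_{n+1} > 0. -/
/-! The substitution `m = 2n + 1 - N` turns the coefficient into
`(n + 1)(N - n)/4 · (m - γ)(m + γ)/((m - 1)(m + 1))`. Since `N` is odd, `m` is even: either
`m = 0`, where numerator and denominator of the second factor are both negative, or `m² ≥ 4 > γ²`,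
where both are positive. -/

theorem div_pos_of_even_of_lt_two {m : ℤ} (hm : Even m) {γ : ℝ} (hγ0 : 0 < γ) (hγ2 : γ < 2) :
    0 < ((m : ℝ) - γ) * (m + γ) / ((m - 1) * (m + 1)) := by
  rcases eq_or_ne m 0 with rfl | hm0
  · norm_num
    positivity
  · obtain ⟨k, rfl⟩ := hm
    have hk : (1 : ℝ) ≤ (k : ℝ) ^ 2 := by
      have hk0 : k ≠ 0 := by rintro rfl; simp at hm0
      have : (1 : ℤ) ≤ k ^ 2 := (one_le_sq_iff_one_le_abs k).mpr (Int.one_le_abs hk0)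
      exact_mod_cast this
    push_cast
    apply div_pos <;> nlinarith

theorem stmt6_general (N : ℕ) (hN : Odd N) (γ : ℝ) (hγ0 : 0 < γ) (hγ2 : γ < 2)
    (n : ℕ) (hn : n + 1 < N) :
    0 < -(((n : ℝ) + 1) * ((n : ℝ) - N) * (2 * (n : ℝ) + 1 - N - γ) * (2 * (n : ℝ) + 1 - N + γ))
      / (4 * (2 * (n : ℝ) - N) * (2 * (n : ℝ) - N + 2)) := by
  set m : ℤ := 2 * n + 1 - N with hm_def
  have hm : (m : ℝ) = 2 * n + 1 - N := by rw [hm_def]; push_cast; ring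
  have hm_even : Even m := by
    obtain ⟨k, rfl⟩ := hN
    exact ⟨n - k, by rw [hm_def]; push_cast; ring⟩
  have hnN : (n : ℝ) < N := by exact_mod_cast (Nat.lt_succ_self n).trans hn
  have hfactor : 0 < ((n : ℝ) + 1) * (N - n) / 4 := by
    exact div_pos (mul_pos (by positivity) (by linarith)) (by norm_num)
  have hsplit : -(((n : ℝ) + 1) * ((n : ℝ) - N) * (2 * (n : ℝ) + 1 - N - γ) * (2 * (n : ℝ) + 1 - N + γ))
      / (4 * (2 * (n : ℝ) - N) * (2 * (n : ℝ) - N + 2))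
      = ((n : ℝ) + 1) * (N - n) / 4 * (((m : ℝ) - γ) * (m + γ) / ((m - 1) * (m + 1))) := by
    have hm_sub_one : 2 * (n : ℝ) - N = m - 1 := by rw [hm]; ring
    rw [← hm, hm_sub_one, div_mul_div_comm]
    congr 1 <;> ring
  rw [hsplit]
  exact mul_pos hfactor (div_pos_of_even_of_lt_two hm_even hγ0 hγ2)

/-- the para-Krawtchouk coefficient C_{n+1} is positive for 0 ≤ n < N-1. -/
theorem stmt6 (N : ℕ) (hN : Odd N) (hN0 : 0 < N) (γ : ℝ) (hγ0 : 0 < γ) (hγ2 : γ < 2)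
    (n : ℕ) (hn : n + 1 < N) :
    0 < -(((n : ℝ) + 1) * ((n : ℝ) - N) * (2 * (n : ℝ) + 1 - N - γ) * (2 * (n : ℝ) + 1 - N + γ))
      / (4 * (2 * (n : ℝ) - N) * (2 * (n : ℝ) - N + 2)) :=
  stmt6_general N hN γ hγ0 hγ2 n hn
end

section
/- With d = 1, a = 1/(1 - N), b = (N + γ - 1)/(N - 1), e = c = (1 - N - γ)/2, c₄ = 0, c₅ = 2, c₆ = 1, the formula C_{n+1} = -((n+1) d_{n-1}/(d_{2n-1} d_{2n+1})) φ^{[n]}(-e_n/d_{2n}) from the classical quadratic-lattice theorem equals the para-Krawtchouk coefficient -((n+1)(n - N)(2n + 1 - N - γ)(2n + 1 - N + γ))/(4(2n - N)(2n - N + 2)) for all 0 ≤ n < N - 1. -/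
/-!
Since `b = 2 a e`, we have `e_n = e · d_{2n}`, so the evaluation point `-e_n / d_{2n}` is the
constant `-e`. There `φ^{[n]}(-e) = (n + e)(a (n - e) + 1)`, which for the para-Krawtchouk data is
`(2n + 1 - N - γ)(2n + 1 - N + γ) / (4 (1 - N))`. Writing `d_m = (1 - N + m) / (1 - N)`, the
prefactor is `(n + 1)(n - N)(1 - N) / ((2n - N)(2n - N + 2))`, and the factors `1 - N` cancel.
-/

section ParaKrawtchouk

variable {K : Type*} [Field K] {s : K}

lemma one_div_one_sub_mul_add_one (hs : 1 - s ≠ 0) (x : K) :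
    1 / (1 - s) * x + 1 = (1 - s + x) / (1 - s) := by
  field_simp
  ring

lemma neg_mul_add_div_eq_neg {a e m : K} (hd : a * (2 * m) + 1 ≠ 0) :
    -((2 * a * e) * m + e) / (a * (2 * m) + 1) = -e := by
  rw [neg_div, neg_inj, div_eq_iff hd]
  ring

lemma paraKrawtchouk_prefactor_eq (hs : 1 - s ≠ 0) (m : K) :
    (m + 1) * (1 / (1 - s) * (m - 1) + 1)
        / ((1 / (1 - s) * (2 * m - 1) + 1) * (1 / (1 - s) * (2 * m + 1) + 1))
      = (m + 1) * (m - s) * (1 - s) / ((2 * m - s) * (2 * m - s + 2)) := by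
  simp only [one_div_one_sub_mul_add_one hs]
  field_simp
  ring

lemma paraKrawtchouk_phi_neg_e_eq [CharZero K] (hs : 1 - s ≠ 0) {a e γ : K}
    (ha : a = 1 / (1 - s)) (he : e = (1 - s - γ) / 2) (m : K) :
    a * (-e) ^ 2 + 2 * a * e * (-e) + e + m * (a * m + 1)
      = (2 * m + 1 - s - γ) * (2 * m + 1 - s + γ) / (4 * (1 - s)) := by
  calc a * (-e) ^ 2 + 2 * a * e * (-e) + e + m * (a * m + 1)
      = (m + e) * (a * (m - e) + 1) := by ring
    _ = _ := by
      rw [ha, he, one_div_one_sub_mul_add_one hs]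
      field_simp
      ring

end ParaKrawtchouk

theorem stmt12_general (N : ℕ) (γ : ℂ)
    (a b e c : ℂ) (c₄ c₅ c₆ : ℂ)
    (ha : a = 1 / (1 - (N : ℂ))) (hb : b = ((N : ℂ) + γ - 1) / ((N : ℂ) - 1))
    (he : e = (1 - (N : ℂ) - γ) / 2) (hc : c = (1 - (N : ℂ) - γ) / 2)
    (hc₄ : c₄ = 0) (hc₅ : c₅ = 2) (hc₆ : c₆ = 1)
    (dN eN : ℤ → ℂ)
    (hdN : ∀ m : ℤ, dN m = a * (m : ℂ) + 1)
    (heN : ∀ m : ℤ, eN m = b * (m : ℂ) + e)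
    (φn : ℤ → ℂ → ℂ)
    (hφn : ∀ (m : ℤ) (z : ℂ), φn m z =
      a * z ^ 2 + (b + (3 / 2) * c₄ * (m : ℂ) * dN m) * z
        + (a * (c₄ * (m : ℂ) ^ 2 / 4) ^ 2 + b * (c₄ * (m : ℂ) ^ 2 / 4) + c)
        + (c₄ * (m : ℂ) / 2) * ((c₄ * (m : ℂ) ^ 2 / 4) + e)
        - ((m : ℂ) / 4) * (16 * c₄ * c₆ - c₅ ^ 2) * dN m)
    (n : ℕ) (hn : n + 1 < N)
    (hd0 : dN (2 * (n : ℤ)) ≠ 0) :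
    -(((n : ℂ) + 1) * dN ((n : ℤ) - 1) / (dN (2 * (n : ℤ) - 1) * dN (2 * (n : ℤ) + 1)))
        * φn (n : ℤ) (-(c₄ * (n : ℂ) ^ 2 / 4) - eN (n : ℤ) / dN (2 * (n : ℤ)))
      = -(((n : ℂ) + 1) * ((n : ℂ) - N) * (2 * (n : ℂ) + 1 - N - γ) * (2 * (n : ℂ) + 1 - N + γ))
        / (4 * (2 * (n : ℂ) - N) * (2 * (n : ℂ) - N + 2)) := by
  have hs : (1 : ℂ) - N ≠ 0 := by
    rw [sub_ne_zero, ne_comm, Ne, Nat.cast_eq_one]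
    omega
  have hb_eq : b = 2 * a * e := by
    have hs' : (N : ℂ) - 1 ≠ 0 := by rwa [← neg_ne_zero, neg_sub]
    rw [hb, ha, he]
    field_simp
    ring
  have hφ_eq : ∀ m z, φn m z = a * z ^ 2 + b * z + c + m * dN m := by
    intro m z
    rw [hφn, hc₄, hc₅, hc₆]
    ring
  have hz : -(c₄ * (n : ℂ) ^ 2 / 4) - eN n / dN (2 * n) = -e := by
    rw [hdN] at hd0
    rw [hc₄, heN, hdN, hb_eq]
    push_cast at hd0 ⊢
    rw [zero_mul, zero_div, neg_zero, zero_sub, ← neg_div]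
    exact neg_mul_add_div_eq_neg hd0
  have hφ_neg_e : φn n (-e) = (2 * n + 1 - N - γ) * (2 * n + 1 - N + γ) / (4 * (1 - N)) := by
    rw [hφ_eq, hdN, hb_eq, hc, ← he]
    push_cast
    exact paraKrawtchouk_phi_neg_e_eq hs ha he n
  rw [hz, hφ_neg_e, hdN, hdN, hdN, ha]
  push_cast
  rw [paraKrawtchouk_prefactor_eq hs]
  field_simp

/-- with the para-Krawtchouk data, the formula
C_{n+1} = -((n+1) d_{n-1}/(d_{2n-1} d_{2n+1})) φ^{[n]}(-e_n/d_{2n}) equals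
-((n+1)(n-N)(2n+1-N-γ)(2n+1-N+γ))/(4(2n-N)(2n-N+2)) for 0 ≤ n < N-1. -/
theorem stmt12 (N : ℕ) (hN : Odd N) (hN0 : 0 < N) (γ : ℂ)
    (a b e c : ℂ) (c₄ c₅ c₆ : ℂ)
    (ha : a = 1 / (1 - (N : ℂ))) (hb : b = ((N : ℂ) + γ - 1) / ((N : ℂ) - 1))
    (he : e = (1 - (N : ℂ) - γ) / 2) (hc : c = (1 - (N : ℂ) - γ) / 2)
    (hc₄ : c₄ = 0) (hc₅ : c₅ = 2) (hc₆ : c₆ = 1)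
    (dN eN : ℤ → ℂ)
    (hdN : ∀ m : ℤ, dN m = a * (m : ℂ) + 1)
    (heN : ∀ m : ℤ, eN m = b * (m : ℂ) + e)
    (φn : ℤ → ℂ → ℂ)
    (hφn : ∀ (m : ℤ) (z : ℂ), φn m z =
      a * z ^ 2 + (b + (3 / 2) * c₄ * (m : ℂ) * dN m) * z
        + (a * (c₄ * (m : ℂ) ^ 2 / 4) ^ 2 + b * (c₄ * (m : ℂ) ^ 2 / 4) + c)
        + (c₄ * (m : ℂ) / 2) * ((c₄ * (m : ℂ) ^ 2 / 4) + e)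
        - ((m : ℂ) / 4) * (16 * c₄ * c₆ - c₅ ^ 2) * dN m)
    (n : ℕ) (hn : n + 1 < N)
    (hdm1 : dN (2 * (n : ℤ) - 1) ≠ 0) (hd0 : dN (2 * (n : ℤ)) ≠ 0)
    (hdp1 : dN (2 * (n : ℤ) + 1) ≠ 0) :
    -(((n : ℂ) + 1) * dN ((n : ℤ) - 1) / (dN (2 * (n : ℤ) - 1) * dN (2 * (n : ℤ) + 1)))
        * φn (n : ℤ) (-(c₄ * (n : ℂ) ^ 2 / 4) - eN (n : ℤ) / dN (2 * (n : ℤ)))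
      = -(((n : ℂ) + 1) * ((n : ℂ) - N) * (2 * (n : ℂ) + 1 - N - γ) * (2 * (n : ℂ) + 1 - N + γ))
        / (4 * (2 * (n : ℂ) - N) * (2 * (n : ℂ) - N + 2)) :=
  stmt12_general N γ a b e c c₄ c₅ c₆ ha hb he hc hc₄ hc₅ hc₆ dN eN hdN heN φn hφn n hn hd0
end
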